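/- Let X be a topological space, (E,ρ) a metric space, and f,g: X → E mappings with β(f) ≤ κ₁ and β(g) ≤ κ₂ for ordinals κ₁, κ₂ > 0. Then the diagonal mapping f△g: X → E × E (with the max metric), (f△g)(x) = (f(x), g(x)), satisfies β(f△g) ≤ κ₁·κ₂. -/

import Mathlib

open Set Filter Ordinal ENNReal

universe u v

section Defs

variable {X : Type u} {E : Type v}

/-- `f` restricted to `A` is `ε`-fragmented: every nonempty subset of `A` has a relatively
open nonempty piece on which the oscillation (diameter of the image) of `f` is at most `ε`. -/
def EpsFragOn [TopologicalSpace X] [PseudoEMetricSpace E] (f : X → E) (A : Set X)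
    (ε : ℝ≥0∞) : Prop :=
  ∀ F : Set X, F ⊆ A → F.Nonempty → ∃ V : Set X, IsOpen V ∧ (V ∩ F).Nonempty ∧
    EMetric.diam (f '' (V ∩ F)) ≤ ε

/-- The fragmentability index `frag f = inf {ε > 0 : f is ε-fragmented}` (with `inf ∅ = ∞`). -/
noncomputable def fragIdx [TopologicalSpace X] [PseudoEMetricSpace E] (f : X → E) : ℝ≥0∞ :=
  sInf {ε | 0 < ε ∧ EpsFragOn f Set.univ ε}

/-- A set `H` is resolvable: every nonempty `A ⊆ X` has a relatively open nonempty piece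
entirely inside `H` or entirely inside its complement. -/
def Resolvable [TopologicalSpace X] (H : Set X) : Prop :=
  ∀ A : Set X, A.Nonempty → ∃ U : Set X, IsOpen U ∧ (U ∩ A).Nonempty ∧
    (U ∩ A ⊆ H ∨ U ∩ A ⊆ Hᶜ)

/-- The σ-fragmentability index by resolvable sets. -/
noncomputable def sfragIdx [TopologicalSpace X] [PseudoEMetricSpace E] (f : X → E) : ℝ≥0∞ :=
  sInf {ε | 0 < ε ∧ ∃ H : ℕ → Set X, (∀ n, Resolvable (H n)) ∧ (⋃ n, H n) = Set.univ ∧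
    ∀ n, EpsFragOn f (H n) ε}

/-- `g` is constant on each set of some resolvable partition of `X`, i.e. on each difference
`U (γ+1) \ U γ` of an increasing transfinite sequence of open sets from `∅` to `X`,
continuous at limit ordinals. -/
def ConstOnResolvablePartition [TopologicalSpace X] (g : X → E) : Prop :=
  ∃ (κ : Ordinal.{u}) (U : Ordinal.{u} → Set X),
    (∀ α, IsOpen (U α)) ∧ (∀ α β : Ordinal, α ≤ β → U α ⊆ U β) ∧
    U 0 = ∅ ∧ U κ = Set.univ ∧
    (∀ γ, γ ≤ κ → Order.IsSuccLimit γ → U γ = ⋃ α < γ, U α) ∧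
    (∀ γ < κ, ∀ x ∈ U (γ + 1) \ U γ, ∀ y ∈ U (γ + 1) \ U γ, g x = g y)

/-- The transfinite derivation of open sets in the definition of the oscillation rank
`β(f, ε)`:  `U 0 = ∅`, `U (α+1) = U α ∪ {x ∉ U α : ∃ open V ∋ x, diam f (V \ U α) < ε}`,
and unions at limit ordinals. -/
noncomputable def oscSet [TopologicalSpace X] [PseudoEMetricSpace E] (f : X → E)
    (ε : ℝ≥0∞) (o : Ordinal.{u}) : Set X :=
  Ordinal.limitRecOn o ∅
    (fun _ U => U ∪ {x | x ∉ U ∧ ∃ V : Set X, IsOpen V ∧ x ∈ V ∧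
      EMetric.diam (f '' (V \ U)) < ε})
    (fun γ _ ih => ⋃ (β : Ordinal) (h : β < γ), ih β h)

/-- `f` has countable oscillation rank: `β(f) < ω₁`, i.e. for every `ε > 0` the derivation
reaches `X` at some countable ordinal. -/
def CountableOscRank [TopologicalSpace X] [PseudoEMetricSpace E] (f : X → E) : Prop :=
  ∀ ε : ℝ≥0∞, 0 < ε → ∃ α < ω₁, oscSet f ε α = Set.univ

/-- A transfinite sequence `(V α)_{α ≤ κ}` of open sets has property `*(f, ε)`. -/
def StarProp [TopologicalSpace X] [PseudoEMetricSpace E] (f : X → E) (ε : ℝ≥0∞)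
    (κ : Ordinal.{u}) (V : Ordinal.{u} → Set X) : Prop :=
  (∀ α, α ≤ κ → IsOpen (V α)) ∧ (∀ α β : Ordinal, α ≤ β → β ≤ κ → V α ⊆ V β) ∧
  V 0 = ∅ ∧ V κ = Set.univ ∧
  (∀ γ, γ ≤ κ → Order.IsSuccLimit γ → V γ = ⋃ α < γ, V α) ∧
  (∀ α < κ, ∀ x ∈ V (α + 1) \ V α, ∃ W : Set X, IsOpen W ∧ x ∈ W ∧
    EMetric.diam (f '' (W \ V α)) < ε)

/-- Uniform distance `d(f, g) = sup_x ρ(f x, g x)` (in `[0, ∞]`). -/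
noncomputable def unifDist [PseudoEMetricSpace E] (f g : X → E) : ℝ≥0∞ :=
  ⨆ x, edist (f x) (g x)

/-- Distance from `f` to the family of σ-fragmented mappings. -/
noncomputable def distToSFrag [TopologicalSpace X] [PseudoEMetricSpace E] (f : X → E) : ℝ≥0∞ :=
  ⨅ (g : {g : X → E // sfragIdx g = 0}), unifDist f g.1

end Defs

/-!
Write `h = f△g`. For every `γ`, the stage `κ₁ * γ` of the derivation for `h` contains the stage
`γ` for `g`; between `κ₁ * γ` and `κ₁ * (γ + 1)` the derivation for `h` runs through the whole
derivation for `f` inside the `(γ + 1)`-st stage for `g`: a point that is new for both `f` and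
`g` has, as witness for `h`, the intersection of its two witnessing neighbourhoods, because
`diam h(S) ≤ max (diam f(S)) (diam g(S))` for the max metric.
-/

section OscSet

variable {X : Type u} {E : Type v} [TopologicalSpace X] [PseudoEMetricSpace E]
  (f : X → E) (ε : ℝ≥0∞)

lemma oscSet_zero : oscSet f ε 0 = ∅ :=
  Ordinal.limitRecOn_zero _ _ _

lemma oscSet_succ (o : Ordinal.{u}) :
    oscSet f ε (o + 1) = oscSet f ε o ∪ {x | x ∉ oscSet f ε o ∧ ∃ V : Set X, IsOpen V ∧
      x ∈ V ∧ Metric.ediam (f '' (V \ oscSet f ε o)) < ε} :=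
  Ordinal.limitRecOn_add_one _ _ _ _

lemma oscSet_limit {o : Ordinal.{u}} (ho : Order.IsSuccLimit o) :
    oscSet f ε o = ⋃ β < o, oscSet f ε β :=
  Ordinal.limitRecOn_limit _ _ _ _ ho

lemma mem_oscSet_limit_iff {o : Ordinal.{u}} (ho : Order.IsSuccLimit o) {x : X} :
    x ∈ oscSet f ε o ↔ ∃ β < o, x ∈ oscSet f ε β := by
  simp only [oscSet_limit f ε ho, mem_iUnion, exists_prop]

lemma oscSet_mono : Monotone (oscSet f ε) := by
  intro a b
  induction b using Ordinal.limitRecOn with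
  | zero => intro h; rw [nonpos_iff_eq_zero.mp h]
  | add_one o ih =>
    intro h
    rcases Order.le_succ_iff_eq_or_le.mp h with h | h
    · rw [h]; rfl
    · exact (ih h).trans (oscSet_succ f ε o ▸ subset_union_left)
  | limit o ho _ =>
    intro h
    rcases h.eq_or_lt with rfl | h
    · rfl
    · exact fun x hx => (mem_oscSet_limit_iff f ε ho).2 ⟨a, h, hx⟩

lemma oscSet_eq_univ_of_le {a b : Ordinal.{u}} (ha : oscSet f ε a = Set.univ) (hab : a ≤ b) :
    oscSet f ε b = Set.univ :=
  eq_univ_of_univ_subset (ha ▸ oscSet_mono f ε hab)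

lemma diff_oscSet_subset_oscSet_succ {o : Ordinal.{u}} {V : Set X} (hV : IsOpen V)
    (hd : Metric.ediam (f '' (V \ oscSet f ε o)) < ε) :
    V \ oscSet f ε o ⊆ oscSet f ε (o + 1) := fun y hy => by
  rw [oscSet_succ]
  exact Or.inr ⟨hy.2, V, hV, hy.1, hd⟩

lemma exists_isOpen_ediam_lt_of_mem_oscSet_succ {o : Ordinal.{u}} {x : X}
    (hx : x ∈ oscSet f ε (o + 1)) (hxo : x ∉ oscSet f ε o) :
    ∃ V : Set X, IsOpen V ∧ x ∈ V ∧ Metric.ediam (f '' (V \ oscSet f ε o)) < ε := by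
  rw [oscSet_succ] at hx
  exact hx.resolve_left hxo |>.2

end OscSet

lemma Metric.ediam_image_prodMk_le {X E F : Type*} [PseudoEMetricSpace E]
    [PseudoEMetricSpace F] (f : X → E) (g : X → F) (S : Set X) :
    Metric.ediam ((fun x => (f x, g x)) '' S) ≤
      max (Metric.ediam (f '' S)) (Metric.ediam (g '' S)) := by
  apply Metric.ediam_le
  rintro _ ⟨x, hx, rfl⟩ _ ⟨y, hy, rfl⟩
  rw [Prod.edist_eq]
  exact max_le_max (Metric.edist_le_ediam_of_mem (mem_image_of_mem f hx) (mem_image_of_mem f hy))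
    (Metric.edist_le_ediam_of_mem (mem_image_of_mem g hx) (mem_image_of_mem g hy))

section Diagonal

variable {X : Type u} {E F : Type*} [TopologicalSpace X] [PseudoEMetricSpace E]
  [PseudoEMetricSpace F] (f : X → E) (g : X → F) (ε : ℝ≥0∞)

lemma union_inter_oscSet_succ_subset_oscSet_prodMk_succ {γ ρ : Ordinal.{u}}
    (α : Ordinal.{u}) (hρ : oscSet g ε γ ∪ (oscSet f ε α ∩ oscSet g ε (γ + 1)) ⊆
      oscSet (fun x => (f x, g x)) ε ρ) :
    oscSet g ε γ ∪ (oscSet f ε (α + 1) ∩ oscSet g ε (γ + 1)) ⊆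
      oscSet (fun x => (f x, g x)) ε (ρ + 1) := by
  set h : X → E × F := fun x => (f x, g x)
  intro x hx
  by_cases hxρ : x ∈ oscSet h ε ρ
  · exact oscSet_mono h ε (Order.le_succ ρ) hxρ
  have hxγ : x ∉ oscSet g ε γ := fun hx' => hxρ (hρ (Or.inl hx'))
  obtain ⟨hxf, hxg⟩ := hx.resolve_left hxγ
  have hxα : x ∉ oscSet f ε α := fun hx' => hxρ (hρ (Or.inr ⟨hx', hxg⟩))
  obtain ⟨W, hWo, hxW, hWd⟩ := exists_isOpen_ediam_lt_of_mem_oscSet_succ f ε hxf hxα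
  obtain ⟨V, hVo, hxV, hVd⟩ := exists_isOpen_ediam_lt_of_mem_oscSet_succ g ε hxg hxγ
  have hVγ : (W ∩ V) \ oscSet h ε ρ ⊆ V \ oscSet g ε γ :=
    fun y hy => ⟨hy.1.2, fun hy' => hy.2 (hρ (Or.inl hy'))⟩
  -- A point of `V` that is not yet in stage `γ` for `g` enters it at `γ + 1`.
  have hWα : (W ∩ V) \ oscSet h ε ρ ⊆ W \ oscSet f ε α := fun y hy =>
    ⟨hy.1.1, fun hy' => hy.2 (hρ (Or.inr ⟨hy',
      diff_oscSet_subset_oscSet_succ g ε hVo hVd (hVγ hy)⟩))⟩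
  refine diff_oscSet_subset_oscSet_succ h ε (hWo.inter hVo) ?_ ⟨⟨hxW, hxV⟩, hxρ⟩
  calc Metric.ediam (h '' ((W ∩ V) \ oscSet h ε ρ))
      ≤ max (Metric.ediam (f '' ((W ∩ V) \ oscSet h ε ρ)))
          (Metric.ediam (g '' ((W ∩ V) \ oscSet h ε ρ))) :=
        Metric.ediam_image_prodMk_le f g _
    _ < ε := max_lt ((Metric.ediam_mono (image_mono hWα)).trans_lt hWd)
        ((Metric.ediam_mono (image_mono hVγ)).trans_lt hVd)

lemma union_inter_oscSet_succ_subset_oscSet_prodMk_add {γ δ : Ordinal.{u}}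
    (hδ : oscSet g ε γ ⊆ oscSet (fun x => (f x, g x)) ε δ) (α : Ordinal.{u}) :
    oscSet g ε γ ∪ (oscSet f ε α ∩ oscSet g ε (γ + 1)) ⊆
      oscSet (fun x => (f x, g x)) ε (δ + α) := by
  induction α using Ordinal.limitRecOn with
  | zero => simpa only [oscSet_zero, empty_inter, union_empty, add_zero] using hδ
  | add_one α ih =>
    rw [← add_assoc]
    exact union_inter_oscSet_succ_subset_oscSet_prodMk_succ f g ε α ih
  | limit α hα ih =>
    rintro x (hx | ⟨hxα, hxγ⟩)
    · exact oscSet_mono _ ε le_self_add (hδ hx)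
    · obtain ⟨β, hβ, hxβ⟩ := (mem_oscSet_limit_iff f ε hα).1 hxα
      exact oscSet_mono _ ε (add_le_add_right hβ.le _) (ih β hβ (Or.inr ⟨hxβ, hxγ⟩))

lemma oscSet_subset_oscSet_prodMk_mul {κ : Ordinal.{u}} (hκ : oscSet f ε κ = Set.univ)
    (γ : Ordinal.{u}) : oscSet g ε γ ⊆ oscSet (fun x => (f x, g x)) ε (κ * γ) := by
  induction γ using Ordinal.limitRecOn with
  | zero => simp only [oscSet_zero, empty_subset]
  | add_one γ ih =>
    rw [mul_add_one]
    intro x hx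
    exact union_inter_oscSet_succ_subset_oscSet_prodMk_add f g ε ih κ
      (Or.inr ⟨hκ ▸ mem_univ x, hx⟩)
  | limit γ hγ ih =>
    intro x hx
    obtain ⟨β, hβ, hxβ⟩ := (mem_oscSet_limit_iff g ε hγ).1 hx
    exact oscSet_mono _ ε (mul_le_mul_right hβ.le κ) (ih β hβ hxβ)

end Diagonal

theorem stmt_14_general {X E : Type*} [TopologicalSpace X] [MetricSpace E]
    (f g : X → E) (kap1 kap2 : Ordinal)
    (hf : ∀ ε : ℝ≥0∞, 0 < ε → ∃ α ≤ kap1, oscSet f ε α = Set.univ)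
    (hg : ∀ ε : ℝ≥0∞, 0 < ε → ∃ α ≤ kap2, oscSet g ε α = Set.univ) :
    ∀ ε : ℝ≥0∞, 0 < ε → ∃ α ≤ kap1 * kap2,
      oscSet (fun x => (f x, g x) : X → E × E) ε α = Set.univ := by
  intro ε hε
  obtain ⟨α₁, hα₁, hf₁⟩ := hf ε hε
  obtain ⟨α₂, hα₂, hg₂⟩ := hg ε hε
  refine ⟨kap1 * α₂, mul_le_mul_right hα₂ kap1, eq_univ_of_univ_subset ?_⟩
  exact hg₂ ▸ oscSet_subset_oscSet_prodMk_mul f g ε (oscSet_eq_univ_of_le f ε hf₁ hα₁) α₂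

/-- the diagonal map into `E × E` with the max metric satisfies
`β(f△g) ≤ κ₁ · κ₂` whenever `β(f) ≤ κ₁` and `β(g) ≤ κ₂` with `κ₁, κ₂ > 0`. -/
theorem stmt_14 {X E : Type*} [TopologicalSpace X] [MetricSpace E]
    (f g : X → E) (kap1 kap2 : Ordinal) (h1 : 0 < kap1) (h2 : 0 < kap2)
    (hf : ∀ ε : ℝ≥0∞, 0 < ε → ∃ α ≤ kap1, oscSet f ε α = Set.univ)
    (hg : ∀ ε : ℝ≥0∞, 0 < ε → ∃ α ≤ kap2, oscSet g ε α = Set.univ) :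
    ∀ ε : ℝ≥0∞, 0 < ε → ∃ α ≤ kap1 * kap2,
      oscSet (fun x => (f x, g x) : X → E × E) ε α = Set.univ :=
  stmt_14_general f g kap1 kap2 hf hg
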